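/- Every coefficient sequence of a product of polynomials of the form 1+q+⋯+q^k (k ≥ 0) is symmetric and unimodal. -/
import Mathlib

open Polynomial Finset

/-- Symmetric (about `d`) unimodal function on `ℤ`, vanishing for negative arguments. -/
def SU (d : ℤ) (F : ℤ → ℕ) : Prop :=
  (∀ i < 0, F i = 0) ∧ (∀ i, F i = F (d - i)) ∧ (∀ i, 2*i + 1 ≤ d → F i ≤ F (i+1))

lemma su_chain {d : ℤ} {F : ℤ → ℕ} (h : SU d F) :
    ∀ (t : ℕ) (a : ℤ), 2*a + 2*t ≤ d → F a ≤ F (a + t) := by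
  intro t
  induction t with
  | zero => intro a _; simp
  | succ t ih =>
    intro a ht
    have h1 : F a ≤ F (a + t) := ih a (by omega)
    have h2 : F (a + t) ≤ F (a + t + 1) := h.2.2 (a + t) (by omega)
    have h3 : a + ((t : ℤ) + 1) = a + t + 1 := by ring
    rw [show ((t + 1 : ℕ) : ℤ) = (t : ℤ) + 1 by push_cast; ring, h3]
    omega

lemma su_pair {d : ℤ} {F : ℤ → ℕ} (h : SU d F) {a b : ℤ}
    (hab : a ≤ b) (hsum : a + b ≤ d) : F a ≤ F b := by
  rcases le_or_gt (2*b) d with h2 | h2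
  · have := su_chain h (b - a).toNat a (by omega)
    rwa [show a + ((b - a).toNat : ℤ) = b by omega] at this
  · have h1 : F a ≤ F (d - b) := by
      have := su_chain h (d - b - a).toNat a (by omega)
      rwa [show a + ((d - b - a).toNat : ℤ) = d - b by omega] at this
    have h3 : F (d - b) = F b := by
      rw [h.2.1 (d - b), show d - (d - b) = b by ring]
    omega

lemma su_window {d : ℤ} {F : ℤ → ℕ} (h : SU d F) (k : ℕ) :
    SU (d + k) (fun n => ∑ j ∈ Finset.range (k+1), F (n - j)) := by
  refine ⟨?_, ?_, ?_⟩
  · intro n hn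
    exact Finset.sum_eq_zero fun j _ => h.1 _ (by omega)
  · intro n
    simp only
    rw [← Finset.sum_range_reflect]
    refine Finset.sum_congr rfl fun j hj => ?_
    have hjk : j ≤ k := by simpa [Nat.lt_succ_iff] using hj
    rw [show (k + 1 - 1 - j : ℕ) = k - j by omega,
      show ((k - j : ℕ) : ℤ) = (k : ℤ) - j by omega,
      h.2.1 (n - ((k : ℤ) - j))]
    congr 1
    ring
  · intro n hn
    simp only
    have h1 : ∑ j ∈ Finset.range (k+2), F (n+1-j)
        = (∑ j ∈ Finset.range (k+1), F (n+1-j)) + F (n - k) := by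
      rw [Finset.sum_range_succ]
      congr 1
      push_cast
      ring_nf
    have h2 : ∑ j ∈ Finset.range (k+2), F (n+1-j)
        = (∑ j ∈ Finset.range (k+1), F (n - j)) + F (n+1) := by
      rw [Finset.sum_range_succ']
      congr 1
      · refine Finset.sum_congr rfl fun j _ => ?_
        congr 1
        push_cast
        ring
      · norm_num
    have hp : F (n - k) ≤ F (n + 1) := su_pair h (by omega) (by omega)
    omega

/-- Coefficient function on `ℤ`. -/
def Fp (p : Polynomial ℕ) : ℤ → ℕ := fun z => if 0 ≤ z then p.coeff z.toNat else 0

lemma coeff_S_mul (p : Polynomial ℕ) (k n : ℕ) :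
    ((∑ i ∈ Finset.range (k+1), (X : Polynomial ℕ)^i) * p).coeff n
      = ∑ j ∈ Finset.range (k+1), if j ≤ n then p.coeff (n-j) else 0 := by
  rw [Finset.sum_mul, finset_sum_coeff]
  exact Finset.sum_congr rfl fun j _ => by rw [X_pow_mul, coeff_mul_X_pow']

lemma Fp_S_mul (p : Polynomial ℕ) (k : ℕ) (n : ℤ) :
    Fp ((∑ i ∈ Finset.range (k+1), (X : Polynomial ℕ)^i) * p) n
      = ∑ j ∈ Finset.range (k+1), Fp p (n - j) := by
  rcases le_or_gt 0 n with hn | hn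
  · rw [Fp, if_pos hn, coeff_S_mul]
    refine Finset.sum_congr rfl fun j _ => ?_
    rcases le_or_gt (j : ℤ) n with hj | hj
    · rw [if_pos (by omega), Fp, if_pos (by omega)]
      congr 1
      omega
    · rw [if_neg (by omega), Fp, if_neg (by omega)]
  · rw [Fp, if_neg (by omega)]
    exact (Finset.sum_eq_zero fun j _ => by rw [Fp, if_neg (by omega)]).symm

lemma su_one : SU 0 (Fp 1) := by
  refine ⟨fun i hi => by rw [Fp, if_neg (by omega)], fun i => ?_, fun i hi => ?_⟩
  · rcases lt_trichotomy i 0 with h | h | h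
    · rw [Fp, if_neg (by omega), Fp, if_pos (by omega), Polynomial.coeff_one,
        if_neg (by omega)]
    · simp [h]
    · rw [Fp, if_pos (by omega), Fp, if_neg (by omega), Polynomial.coeff_one,
        if_neg (by omega)]
  · rw [Fp, if_neg (by omega)]
    exact Nat.zero_le _

lemma su_prod (m : ℕ) (k : Fin m → ℕ) :
    SU (∑ j, (k j : ℤ)) (Fp (∏ j, ∑ i ∈ Finset.range (k j + 1), (X : Polynomial ℕ)^i)) := by
  induction m with
  | zero => simpa using su_one
  | succ m ih =>
    rw [Fin.prod_univ_succ, Fin.sum_univ_succ]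
    have hw := su_window (ih (fun j => k j.succ)) (k 0)
    have heq : Fp ((∑ i ∈ Finset.range (k 0 + 1), (X : Polynomial ℕ)^i) *
        ∏ t : Fin m, ∑ i ∈ Finset.range (k t.succ + 1), (X : Polynomial ℕ)^i)
        = fun n => ∑ a ∈ Finset.range (k 0 + 1),
            Fp (∏ t : Fin m, ∑ i ∈ Finset.range (k t.succ + 1), (X : Polynomial ℕ)^i) (n - a) :=
      funext fun n => Fp_S_mul _ _ n
    rw [heq, add_comm ((k 0 : ℤ))]
    exact hw

lemma Fp_nat (p : Polynomial ℕ) (i : ℕ) : Fp p i = p.coeff i := by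
  rw [Fp, if_pos (by omega)]
  norm_num

/-- Every product of polynomials of the form `1 + q + ⋯ + q^k` (`k ≥ 0`) has a
symmetric and unimodal coefficient sequence; symmetry is with respect to the degree
`∑_j k_j` of the product. -/
theorem prod_qint_symmetric_unimodal (m : ℕ) (k : Fin m → ℕ) :
    (∀ i ≤ ∑ j, k j,
      (∏ j, ∑ i ∈ Finset.range (k j + 1), (X : Polynomial ℕ) ^ i).coeff i =
      (∏ j, ∑ i ∈ Finset.range (k j + 1), (X : Polynomial ℕ) ^ i).coeff ((∑ j, k j) - i)) ∧
    (∃ peak : ℕ,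
      (∀ i, i < peak →
        (∏ j, ∑ i ∈ Finset.range (k j + 1), (X : Polynomial ℕ) ^ i).coeff i ≤
        (∏ j, ∑ i ∈ Finset.range (k j + 1), (X : Polynomial ℕ) ^ i).coeff (i + 1)) ∧
      (∀ i, peak ≤ i →
        (∏ j, ∑ i ∈ Finset.range (k j + 1), (X : Polynomial ℕ) ^ i).coeff (i + 1) ≤
        (∏ j, ∑ i ∈ Finset.range (k j + 1), (X : Polynomial ℕ) ^ i).coeff i)) := by
  set P := ∏ j, ∑ i ∈ Finset.range (k j + 1), (X : Polynomial ℕ) ^ i with hP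
  set D := ∑ j, k j with hD
  have hsu : SU (D : ℤ) (Fp P) := by
    have := su_prod m k
    rwa [show (∑ j, (k j : ℤ)) = (D : ℤ) by push_cast [hD]; rfl] at this
  constructor
  · intro i hi
    have h1 := hsu.2.1 (i : ℤ)
    rw [Fp_nat, show ((D : ℤ) - i) = ((D - i : ℕ) : ℤ) by omega, Fp_nat] at h1
    exact h1
  · refine ⟨D / 2, fun i hi => ?_, fun i hi => ?_⟩
    · have h1 := hsu.2.2 (i : ℤ) (by omega)
      rwa [Fp_nat, show ((i : ℤ) + 1) = ((i + 1 : ℕ) : ℤ) by push_cast; ring, Fp_nat] at h1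
    · have h1 : Fp P ((i : ℤ) + 1) ≤ Fp P i := by
        rw [hsu.2.1 ((i : ℤ) + 1)]
        exact su_pair hsu (by omega) (by omega)
      rwa [Fp_nat, show ((i : ℤ) + 1) = ((i + 1 : ℕ) : ℤ) by push_cast; ring, Fp_nat] at h1
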